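/- Let C_m and C_M be real numbers with 0 < C_m ≤ C_M, let λ be real with 0 < λ ≤ 1, and set θ_s = (1 + 1/C_M)^{C_m/λ} − 1 and θ_f = (1 + 1/C_M)^{C_m·λ} − 1 (real exponentiation). Then for all real numbers N_s ≥ 0 and N_f ≥ 0 with N_s·λ + N_f ≥ C_m, it holds that ((1 + 1/C_M)^{N_s} − 1)/θ_s · (1 + 1/C_M)^{N_f} + ((1 + 1/C_M)^{N_f} − 1)/θ_f ≥ 1. -/

import Mathlib

/-!
Write `r = 1 + 1/C_M = exp ℓ` and pass to the exponents `s = ℓ N_s`, `t = ℓ N_f`, `w = ℓ C_m`;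
then `w ≤ C_m / C_M ≤ 1`. The bound is increasing in `t`, so it suffices to treat the
boundary `s λ + t = w`. Parametrised by `σ = w/λ - s ≥ 0` it becomes a constant plus a nonnegative
combination of `exp (-(1 - λ) σ)` and `exp (λ σ)`, hence convex, and it equals `1` at `σ = 0`. Its tangent
there has nonnegative slope exactly when `1 - e^{-wλ} ≤ λ (1 - e^{-w/λ})`. In the variable
`e^{-wλ}` the right side is concave, so this reduces to the extreme case `w = 1`,
`p (1 - e^{-1/p}) ≤ 1 - e^{-p}` for `p = 1/λ ≥ 1`, which follows from Taylor bounds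
(expanded around `p = 1`, where it is an equality, and a Padé bound for `p ≥ 2`).
-/

open Real

lemma exp_neg_le_one_sub_add_sq_div_two {x : ℝ} (hx : 0 ≤ x) :
    exp (-x) ≤ 1 - x + x ^ 2 / 2 := by
  have hcubic : 1 + x + x ^ 2 / 2 + x ^ 3 / 6 ≤ exp x := by
    simpa [Finset.sum_range_succ, Nat.factorial] using sum_le_exp_of_nonneg hx 4
  rw [exp_neg, inv_le_iff_one_le_mul₀ (exp_pos x)]
  nlinarith [pow_nonneg hx 3, pow_nonneg hx 4, pow_nonneg hx 5]

lemma mul_one_sub_exp_neg_inv_le_of_le_two {p : ℝ} (hp1 : 1 ≤ p) (hp2 : p ≤ 2) :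
    p * (1 - exp (-p⁻¹)) ≤ 1 - exp (-p) := by
  have hp0 : 0 < p := by linarith
  set s := p - 1 with hs
  have hs0 : 0 ≤ s := by linarith
  have hsp : 0 ≤ s / p := by positivity
  -- centre the expansion at `p = 1`, where the inequality is an equality
  have hA : exp (-p⁻¹) * exp 1 = exp (s / p) := by
    rw [← exp_add]; congr 1; field_simp; ring
  have hB : exp (-p) * exp 1 = exp (-s) := by
    rw [← exp_add]; congr 1; ring
  have hquad : p * (1 + s / p + (s / p) ^ 2 / 2) ≤ p * exp (s / p) :=
    mul_le_mul_of_nonneg_left (quadratic_le_exp_of_nonneg hsp) hp0.le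
  have hexpand : p * (1 + s / p + (s / p) ^ 2 / 2) = p + s + s ^ 2 / (2 * p) := by
    field_simp
  have hcube : s ^ 3 / (2 * p) ≤ s / 4 := by
    rw [div_le_iff₀ (by positivity)]; nlinarith [mul_nonneg hs0 (mul_nonneg hs0 hs0)]
  have hsq : s ^ 2 / (2 * p) - s ^ 2 / 2 = -(s ^ 3 / (2 * p)) := by field_simp; ring
  have he : exp 1 < 2.75 := exp_one_lt_d9.trans (by norm_num)
  have hneg := exp_neg_le_one_sub_add_sq_div_two hs0
  have key : exp 1 * s ≤ p * exp (s / p) - exp (-s) := by nlinarith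
  refine le_of_mul_le_mul_right ?_ (exp_pos 1)
  nlinarith

lemma mul_one_sub_exp_neg_inv_le_of_two_le {p : ℝ} (hp : 2 ≤ p) :
    p * (1 - exp (-p⁻¹)) ≤ 1 - exp (-p) := by
  have hp0 : 0 < p := by linarith
  have hx : p⁻¹ < 2 := by
    rw [inv_lt_comm₀ hp0 two_pos]; linarith
  have hpade : (2 * p - 1) / (2 * p + 1) ≤ exp (-p⁻¹) := by
    calc (2 * p - 1) / (2 * p + 1) = ((2 + p⁻¹) / (2 - p⁻¹))⁻¹ := by
          field_simp
      _ ≤ exp (-p⁻¹) := by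
          rw [exp_neg]
          exact inv_anti₀ (exp_pos _) (exp_le_two_add_div_two_sub (by positivity) hx)
  have htail : exp (-p) ≤ (2 * p + 1)⁻¹ := by
    rw [exp_neg]
    exact inv_anti₀ (by positivity) (by nlinarith [quadratic_le_exp_of_nonneg hp0.le])
  calc p * (1 - exp (-p⁻¹)) ≤ p * (1 - (2 * p - 1) / (2 * p + 1)) := by gcongr
    _ = 1 - (2 * p + 1)⁻¹ := by field_simp; ring
    _ ≤ 1 - exp (-p) := by linarith

lemma mul_one_sub_exp_neg_inv_le {p : ℝ} (hp : 1 ≤ p) :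
    p * (1 - exp (-p⁻¹)) ≤ 1 - exp (-p) := by
  rcases le_total p 2 with hp2 | hp2
  · exact mul_one_sub_exp_neg_inv_le_of_le_two hp hp2
  · exact mul_one_sub_exp_neg_inv_le_of_two_le hp2

lemma one_sub_le_mul_one_sub_rpow {q c t₀ t : ℝ} (hq : 1 ≤ q) (hc : 0 ≤ c) (ht₀ : 0 ≤ t₀)
    (ht₀t : t₀ ≤ t) (ht : t ≤ 1) (h : 1 - t₀ ≤ c * (1 - t₀ ^ q)) :
    1 - t ≤ c * (1 - t ^ q) := by
  rcases ht₀t.eq_or_lt with rfl | ht₀t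
  · exact h
  rcases ht.eq_or_lt with rfl | ht
  · simp
  have hchord := (convexOn_rpow hq).secant_mono_aux1 (Set.mem_Ici.2 ht₀)
    (Set.mem_Ici.2 zero_le_one) ht₀t ht
  simp only [one_rpow, mul_one] at hchord
  refine le_of_mul_le_mul_left ?_ (sub_pos.2 (ht₀t.trans ht))
  nlinarith [mul_le_mul_of_nonneg_left hchord hc, mul_le_mul_of_nonneg_left h (sub_nonneg.2 ht.le)]

lemma one_sub_exp_neg_mul_le {w lam : ℝ} (hw0 : 0 ≤ w) (hw1 : w ≤ 1) (hlam0 : 0 < lam)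
    (hlam1 : lam ≤ 1) : 1 - exp (-(w * lam)) ≤ lam * (1 - exp (-(w / lam))) := by
  have hq : 1 ≤ (lam ^ 2)⁻¹ := one_le_inv₀ (by positivity) |>.2 (by nlinarith)
  have hpow (x : ℝ) : exp (-(x * lam)) ^ (lam ^ 2)⁻¹ = exp (-(x / lam)) := by
    rw [← exp_mul]; congr 1; field_simp
  have hend : 1 - exp (-(1 * lam)) ≤ lam * (1 - exp (-(1 * lam)) ^ (lam ^ 2)⁻¹) := by
    have h := mul_one_sub_exp_neg_inv_le (one_le_inv₀ hlam0 |>.2 hlam1)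
    rw [inv_inv] at h
    rw [hpow, one_mul, one_div]
    calc 1 - exp (-lam) = lam * (lam⁻¹ * (1 - exp (-lam))) := by field_simp
      _ ≤ lam * (1 - exp (-lam⁻¹)) := by gcongr
  rw [← hpow]
  refine one_sub_le_mul_one_sub_rpow hq hlam0.le (exp_pos _).le ?_ ?_ hend
  · gcongr
  · rw [exp_le_one_iff]; nlinarith

/-- The bound of the theorem with `(1 + 1/C_M) ^ N = exp (ℓ N)`, in the exponents
`s = ℓ N_s`, `t = ℓ N_f`, `w = ℓ C_m`. -/
noncomputable def clearingBound (w lam s t : ℝ) : ℝ :=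
  (exp s - 1) / (exp (w / lam) - 1) * exp t + (exp t - 1) / (exp (w * lam) - 1)

section clearingBound

variable {w lam : ℝ}

lemma clearingBound_mono {s t t' : ℝ} (hw : 0 < w) (hlam : 0 < lam) (hs : 0 ≤ s)
    (htt' : t ≤ t') : clearingBound w lam s t ≤ clearingBound w lam s t' := by
  have hE : 0 < exp (w / lam) - 1 := by simp only [sub_pos, one_lt_exp_iff]; positivity
  have hF : 0 < exp (w * lam) - 1 := by simp only [sub_pos, one_lt_exp_iff]; positivity
  have hcoef : 0 ≤ (exp s - 1) / (exp (w / lam) - 1) :=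
    div_nonneg (by simpa using hs) hE.le
  unfold clearingBound
  gcongr

lemma one_le_clearingBound_boundary {σ : ℝ} (hw0 : 0 < w) (hw1 : w ≤ 1) (hlam0 : 0 < lam)
    (hlam1 : lam ≤ 1) (hσ : 0 ≤ σ) : 1 ≤ clearingBound w lam (w / lam - σ) (lam * σ) := by
  set E := exp (w / lam)
  set F := exp (w * lam)
  have hF : 1 < F := by simp only [F, one_lt_exp_iff]; positivity
  have hFE : F ≤ E := exp_le_exp.2 (by
    rw [le_div_iff₀ hlam0]; nlinarith [mul_pos hw0 hlam0])
  have hslope : (1 - lam) * E * F + lam * F ≤ E := by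
    have hexp := one_sub_exp_neg_mul_le hw0.le hw1 hlam0 hlam1
    rw [exp_neg, exp_neg] at hexp
    have hE0 : 0 < E := exp_pos _
    have hF0 : 0 < F := exp_pos _
    field_simp at hexp
    nlinarith
  -- tangent lines at `σ = 0`; by `hslope` the resulting linear lower bound is nondecreasing
  have ha := add_one_le_exp (-((1 - lam) * σ))
  have hb := add_one_le_exp (lam * σ)
  have hprod : (exp (w / lam - σ) - 1) * exp (lam * σ) =
      E * exp (-((1 - lam) * σ)) - exp (lam * σ) := by
    rw [sub_mul, one_mul, ← exp_add, ← exp_add]; ring_nf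
  unfold clearingBound
  rw [div_mul_eq_mul_div, hprod, div_add_div _ _ (by linarith) (by linarith),
    one_le_div (by nlinarith)]
  nlinarith [mul_le_mul_of_nonneg_left ha (by nlinarith : 0 ≤ (F - 1) * E),
    mul_le_mul_of_nonneg_left hb (sub_nonneg.2 hFE), mul_nonneg hσ (sub_nonneg.2 hslope)]

lemma one_le_clearingBound {s t : ℝ} (hw0 : 0 < w) (hw1 : w ≤ 1) (hlam0 : 0 < lam)
    (hlam1 : lam ≤ 1) (hs : 0 ≤ s) (ht : 0 ≤ t) (hst : w ≤ s * lam + t) :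
    1 ≤ clearingBound w lam s t := by
  by_cases hslow : w ≤ s * lam
  · have hE : 0 < exp (w / lam) - 1 := by simp only [sub_pos, one_lt_exp_iff]; positivity
    have hF : 0 < exp (w * lam) - 1 := by simp only [sub_pos, one_lt_exp_iff]; positivity
    have hs1 : 1 ≤ (exp s - 1) / (exp (w / lam) - 1) := by
      rw [one_le_div hE]; gcongr; rwa [div_le_iff₀ hlam0]
    have ht1 : 1 ≤ exp t := one_le_exp ht
    unfold clearingBound
    nlinarith [div_nonneg (sub_nonneg.2 ht1) hF.le]
  · set σ := w / lam - s
    have hσ : 0 ≤ σ := by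
      simp only [σ, sub_nonneg]; rw [le_div_iff₀ hlam0]; linarith
    calc 1 ≤ clearingBound w lam (w / lam - σ) (lam * σ) :=
          one_le_clearingBound_boundary hw0 hw1 hlam0 hlam1 hσ
      _ ≤ clearingBound w lam s t := by
          rw [sub_sub_cancel]
          refine clearingBound_mono hw0 hlam0 hs ?_
          simp only [σ]; rw [mul_sub, mul_div_cancel₀ _ hlam0.ne']; linarith

end clearingBound

/-- Analytic core of Lemma 6: with `θ_s = (1 + 1/C_M)^{C_m/λ} - 1` and
`θ_f = (1 + 1/C_M)^{C_m·λ} - 1`, whenever `N_s·λ + N_f ≥ C_m` the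
lower bound of Lemma 5 already reaches `1`. -/
theorem stmt_6 (Cm CM lam : ℝ) (hCm : 0 < Cm) (hle : Cm ≤ CM)
    (hlam0 : 0 < lam) (hlam1 : lam ≤ 1)
    (θs θf : ℝ)
    (hθs : θs = (1 + 1 / CM) ^ (Cm / lam) - 1)
    (hθf : θf = (1 + 1 / CM) ^ (Cm * lam) - 1) :
    ∀ Ns Nf : ℝ, 0 ≤ Ns → 0 ≤ Nf → Ns * lam + Nf ≥ Cm →
      ((1 + 1 / CM) ^ Ns - 1) / θs * (1 + 1 / CM) ^ Nf
        + ((1 + 1 / CM) ^ Nf - 1) / θf ≥ 1 := by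
  intro Ns Nf hNs hNf hN
  have hCM : 0 < CM := hCm.trans_le hle
  have hr : 1 < 1 + 1 / CM := by simpa using hCM
  set ℓ := log (1 + 1 / CM)
  have hℓ : 0 < ℓ := log_pos hr
  have hw1 : ℓ * Cm ≤ 1 := calc
    ℓ * Cm ≤ 1 / CM * Cm := by
      gcongr; linarith [log_le_sub_one_of_pos (zero_lt_one.trans hr)]
    _ ≤ 1 := by rw [one_div_mul_eq_div, div_le_one hCM]; exact hle
  subst hθs hθf
  simp only [rpow_def_of_pos (zero_lt_one.trans hr), ← mul_div_assoc, ← mul_assoc]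
  refine one_le_clearingBound (by positivity) hw1 hlam0 hlam1 (by positivity) (by positivity) ?_
  nlinarith
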